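/- arXiv:1303.5603 — 4 statements merged into one kernel-verified Lean document; each statement's English description precedes it below -/
import Mathlib

section
/- If G is a d-leveled graph (every maximal clique has size d+1, and every d-clique is contained in exactly two (d+1)-cliques) whose vertex set is partitioned as I ⊔ X where I is an independent set, then |I| ≤ 2·|X|^d. -/
/-!
Every vertex `v ∈ I` lies in a maximal clique, which has `d + 1` vertices; since `I` is
independent, the other `d` of them form a `d`-subset of `X`. A `d`-clique extends to only two
`(d + 1)`-cliques, so at most two vertices of `I` are assigned the same `d`-subset of `X`, whence
`|I| ≤ 2 · C(|X|, d) ≤ 2 · |X|^d`.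
-/

/-- A graph is `d`-leveled if every maximal clique has size `d+1` and every clique of
size `d` is contained in exactly two cliques of size `d+1`. -/
def SimpleGraph.IsLeveled {V : Type*} (G : SimpleGraph V) (d : ℕ) : Prop :=
  (∀ s : Finset V, G.IsClique s → (∀ t : Finset V, G.IsClique t → s ⊆ t → s = t) →
    s.card = d + 1) ∧
  (∀ s : Finset V, G.IsNClique d s →
    {t : Finset V | G.IsNClique (d + 1) t ∧ s ⊆ t}.ncard = 2)

namespace SimpleGraph.IsLeveled

open Finset

variable {V : Type*} {G : SimpleGraph V} {d : ℕ}

theorem exists_isNClique_mem [Finite V] (hG : G.IsLeveled d) (v : V) :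
    ∃ s : Finset V, G.IsNClique (d + 1) s ∧ v ∈ s := by
  obtain ⟨s, hvs, hs, hmax⟩ := Finite.exists_le_maximal (p := fun s : Finset V => G.IsClique s)
    (a := {v}) (by simp)
  exact ⟨s, ⟨hs, hG.1 s hs fun t ht hst => hst.antisymm (hmax ht hst)⟩,
    singleton_subset_iff.1 hvs⟩

theorem card_le_two_of_isNClique_insert [DecidableEq V] (hG : G.IsLeveled d) {a W : Finset V}
    (ha : G.IsNClique d a) (hW : ∀ w ∈ W, G.IsNClique (d + 1) (insert w a)) : #W ≤ 2 := by
  have notMem {w} (hw : w ∈ W) : w ∉ a := fun hwa => by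
    have := (hW w hw).card_eq
    rw [insert_eq_of_mem hwa, ha.card_eq] at this
    omega
  have hinj : Set.InjOn (insert · a) (W : Set V) := fun w hw w' _ h =>
    (insert_inj (notMem hw)).1 h
  calc #W = (↑(W.image (insert · a)) : Set (Finset V)).ncard := by
        rw [Set.ncard_coe_finset, card_image_of_injOn hinj]
    _ ≤ {t : Finset V | G.IsNClique (d + 1) t ∧ a ⊆ t}.ncard := by
        refine Set.ncard_le_ncard ?_ (Set.finite_of_ncard_ne_zero (by rw [hG.2 a ha]; simp))
        intro t ht
        obtain ⟨w, hw, rfl⟩ := mem_image.1 ht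
        exact ⟨hW w hw, subset_insert w a⟩
    _ = 2 := hG.2 a ha

theorem card_le_two_mul_choose [DecidableEq V] (hG : G.IsLeveled d) {I X : Finset V}
    (hI : ∀ v ∈ I, ∃ a ∈ X.powersetCard d, G.IsNClique (d + 1) (insert v a)) :
    #I ≤ 2 * (#X).choose d := by
  choose! f hfX hf using hI
  rw [← card_powersetCard]
  refine card_le_mul_card_image_of_maps_to hfX 2 fun a ha => ?_
  have hfiber : ∀ w ∈ {x ∈ I | f x = a}, G.IsNClique (d + 1) (insert w a) := fun w hw => by
    obtain ⟨hwI, rfl⟩ := mem_filter.1 hw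
    exact hf w hwI
  rcases {x ∈ I | f x = a}.eq_empty_or_nonempty with hempty | ⟨v, hv⟩
  · simp [hempty]
  · have ha' : G.IsNClique d a :=
      ⟨(hfiber v hv).isClique.subset (subset_insert v a), (mem_powersetCard.1 ha).2⟩
    exact hG.card_le_two_of_isNClique_insert ha' hfiber

theorem exists_mem_powersetCard_isNClique_insert [Fintype V] [DecidableEq V]
    (hG : G.IsLeveled d) {I X : Finset V} (hpart : I ∪ X = univ)
    (hI : ∀ u ∈ I, ∀ v ∈ I, ¬ G.Adj u v) {v : V} (hv : v ∈ I) :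
    ∃ a ∈ X.powersetCard d, G.IsNClique (d + 1) (insert v a) := by
  obtain ⟨s, hs, hvs⟩ := hG.exists_isNClique_mem v
  refine ⟨s.erase v, mem_powersetCard.2 ⟨fun w hw => ?_, ?_⟩, by rwa [insert_erase hvs]⟩
  · obtain ⟨hwv, hws⟩ := mem_erase.1 hw
    have hwI : w ∉ I := fun hwI => hI w hwI v hv (hs.isClique hws hvs hwv)
    simpa [hwI] using (hpart.symm ▸ mem_univ w : w ∈ I ∪ X)
  · rw [card_erase_of_mem hvs, hs.card_eq, Nat.add_sub_cancel]

end SimpleGraph.IsLeveled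

theorem leveled_independent_bound_general {V : Type*} [Fintype V] [DecidableEq V]
    (G : SimpleGraph V) (d : ℕ) (hG : G.IsLeveled d)
    (I X : Finset V) (hpart : I ∪ X = Finset.univ)
    (hI : ∀ u ∈ I, ∀ v ∈ I, ¬ G.Adj u v) :
    I.card ≤ 2 * X.card ^ d :=
  calc I.card ≤ 2 * X.card.choose d := hG.card_le_two_mul_choose fun _ hv =>
        hG.exists_mem_powersetCard_isNClique_insert hpart hI hv
    _ ≤ 2 * X.card ^ d := Nat.mul_le_mul_left 2 (Nat.choose_le_pow _ _)

/-- If `G` is a `d`-leveled graph whose vertex set is partitioned as `I ⊔ X` with `I`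
an independent set, then `|I| ≤ 2 |X|^d`. -/
theorem leveled_independent_bound {V : Type*} [Fintype V] [DecidableEq V]
    (G : SimpleGraph V) (d : ℕ) (hG : G.IsLeveled d)
    (I X : Finset V) (hpart : I ∪ X = Finset.univ) (hdisj : Disjoint I X)
    (hI : ∀ u ∈ I, ∀ v ∈ I, ¬ G.Adj u v) :
    I.card ≤ 2 * X.card ^ d :=
  leveled_independent_bound_general G d hG I X hpart hI
end

section
/- If G is a d-leveled graph and σ is a clique in G of size |σ| ≤ d, then the link lk_G σ is a (d − |σ|)-leveled graph. In particular, in a d-leveled graph the link of every clique of size d−1 is a disjoint union of cycles. -/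
/-- The graph link of a clique `σ` in `G`: the induced subgraph of `G` on the common
neighborhood of all vertices of `σ`. -/
def SimpleGraph.graphLink {V : Type*} (G : SimpleGraph V) (σ : Finset V) :
    SimpleGraph {v : V | ∀ u ∈ σ, G.Adj u v} :=
  G.induce {v : V | ∀ u ∈ σ, G.Adj u v}

namespace SimpleGraph

variable {V : Type*} {G : SimpleGraph V} {σ : Finset V}

lemma notMem_of_forall_adj {v : V} (hv : v ∈ {v : V | ∀ u ∈ σ, G.Adj u v}) : v ∉ σ :=
  fun hvσ => G.loopless.irrefl v (hv v hvσ)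

variable [DecidableEq V]

def linkJoin (G : SimpleGraph V) (σ : Finset V) (s : Finset {v : V | ∀ u ∈ σ, G.Adj u v}) :
    Finset V :=
  σ ∪ s.map (Function.Embedding.subtype _)

lemma mem_linkJoin {s : Finset {v : V | ∀ u ∈ σ, G.Adj u v}} {v : V} :
    v ∈ G.linkJoin σ s ↔ v ∈ σ ∨ ∃ a ∈ s, (a : V) = v := by
  simp [linkJoin]

lemma card_linkJoin (s : Finset {v : V | ∀ u ∈ σ, G.Adj u v}) :
    (G.linkJoin σ s).card = σ.card + s.card := by
  rw [linkJoin, Finset.card_union_of_disjoint, Finset.card_map]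
  rw [Finset.disjoint_right]
  simp only [Finset.mem_map, Function.Embedding.coe_subtype]
  rintro _ ⟨a, -, rfl⟩
  exact notMem_of_forall_adj a.2

lemma linkJoin_subset_linkJoin_iff {s t : Finset {v : V | ∀ u ∈ σ, G.Adj u v}} :
    G.linkJoin σ s ⊆ G.linkJoin σ t ↔ s ⊆ t := by
  refine ⟨fun h a ha => ?_, fun h => Finset.union_subset_union_right (Finset.map_subset_map.2 h)⟩
  rcases mem_linkJoin.1 (h (mem_linkJoin.2 (Or.inr ⟨a, ha, rfl⟩))) with haσ | ⟨b, hb, hba⟩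
  · exact absurd haσ (notMem_of_forall_adj a.2)
  · rwa [← Subtype.ext hba]

lemma linkJoin_injective : Function.Injective (G.linkJoin σ) := fun _ _ h =>
  (linkJoin_subset_linkJoin_iff.1 h.le).antisymm (linkJoin_subset_linkJoin_iff.1 h.ge)

lemma isClique_linkJoin_iff (hσ : G.IsClique σ) {s : Finset {v : V | ∀ u ∈ σ, G.Adj u v}} :
    G.IsClique (G.linkJoin σ s : Set V) ↔ (G.graphLink σ).IsClique (s : Set _) := by
  refine ⟨fun h a ha b hb hab => h (mem_linkJoin.2 (Or.inr ⟨a, ha, rfl⟩))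
    (mem_linkJoin.2 (Or.inr ⟨b, hb, rfl⟩)) (Subtype.coe_ne_coe.2 hab), fun h v hv w hw hvw => ?_⟩
  rw [Finset.mem_coe, mem_linkJoin] at hv hw
  rcases hv with hv | ⟨a, ha, rfl⟩ <;> rcases hw with hw | ⟨b, hb, rfl⟩
  · exact hσ hv hw hvw
  · exact b.2 v hv
  · exact (a.2 w hw).symm
  · exact h ha hb (Subtype.coe_ne_coe.1 hvw)

lemma isNClique_linkJoin_iff (hσ : G.IsClique σ) {n : ℕ}
    {s : Finset {v : V | ∀ u ∈ σ, G.Adj u v}} :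
    G.IsNClique (σ.card + n) (G.linkJoin σ s) ↔ (G.graphLink σ).IsNClique n s := by
  rw [isNClique_iff, isNClique_iff, isClique_linkJoin_iff hσ, card_linkJoin, Nat.add_left_cancel_iff]

lemma exists_linkJoin_eq {t : Finset V} (ht : G.IsClique (t : Set V)) (hσt : σ ⊆ t) :
    ∃ s, G.linkJoin σ s = t := by
  classical
  refine ⟨t.subtype _, Finset.ext fun v => ⟨fun hv => ?_, fun hv => ?_⟩⟩
  · rcases mem_linkJoin.1 hv with hvσ | ⟨a, ha, rfl⟩
    exacts [hσt hvσ, Finset.mem_subtype.1 ha]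
  · by_cases hvσ : v ∈ σ
    · exact mem_linkJoin.2 (Or.inl hvσ)
    · refine mem_linkJoin.2 (Or.inr ⟨⟨v, fun u hu => ?_⟩, Finset.mem_subtype.2 hv, rfl⟩)
      exact ht (hσt hu) hv (ne_of_mem_of_not_mem hu hvσ)

lemma card_linkJoin_of_maximal (hσ : G.IsClique σ) {n : ℕ}
    (hmax : ∀ t : Finset V, G.IsClique (t : Set V) →
      (∀ t' : Finset V, G.IsClique (t' : Set V) → t ⊆ t' → t = t') → t.card = n)
    {s : Finset {v : V | ∀ u ∈ σ, G.Adj u v}} (hs : (G.graphLink σ).IsClique (s : Set _))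
    (hsmax : ∀ s' : Finset _, (G.graphLink σ).IsClique (s' : Set _) → s ⊆ s' → s = s') :
    σ.card + s.card = n := by
  rw [← card_linkJoin]
  refine hmax _ ((isClique_linkJoin_iff hσ).2 hs) fun t ht hst => ?_
  obtain ⟨s', rfl⟩ := exists_linkJoin_eq ht ((Finset.subset_union_left).trans hst)
  rw [hsmax s' ((isClique_linkJoin_iff hσ).1 ht) (linkJoin_subset_linkJoin_iff.1 hst)]

lemma image_linkJoin_cliquesAbove (hσ : G.IsClique σ) (n : ℕ)
    (s : Finset {v : V | ∀ u ∈ σ, G.Adj u v}) :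
    G.linkJoin σ '' {t | (G.graphLink σ).IsNClique n t ∧ s ⊆ t} =
      {t | G.IsNClique (σ.card + n) t ∧ G.linkJoin σ s ⊆ t} := by
  ext t
  constructor
  · rintro ⟨t, ⟨ht, hst⟩, rfl⟩
    exact ⟨(isNClique_linkJoin_iff hσ).2 ht, linkJoin_subset_linkJoin_iff.2 hst⟩
  · rintro ⟨ht, hst⟩
    obtain ⟨t, rfl⟩ := exists_linkJoin_eq ht.1 ((Finset.subset_union_left).trans hst)
    exact ⟨t, ⟨(isNClique_linkJoin_iff hσ).1 ht, linkJoin_subset_linkJoin_iff.1 hst⟩, rfl⟩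

end SimpleGraph

open SimpleGraph in
/-- If `G` is `d`-leveled and `σ` is a clique of size at most `d`, then the link of
`σ` is `(d - |σ|)`-leveled.  In particular the link of a clique of size `d - 1` is
1-leveled, i.e. a disjoint union of cycles. -/
theorem isLeveled_graphLink {V : Type*} [DecidableEq V] (G : SimpleGraph V) (d : ℕ)
    (hG : G.IsLeveled d) (σ : Finset V) (hσ : G.IsClique σ) (hcard : σ.card ≤ d) :
    (G.graphLink σ).IsLeveled (d - σ.card) ∧
      (σ.card + 1 = d → (G.graphLink σ).IsLeveled 1) := by
  obtain ⟨hmax, hcount⟩ := hG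
  have hd : σ.card + (d - σ.card) = d := Nat.add_sub_cancel' hcard
  have hlink : (G.graphLink σ).IsLeveled (d - σ.card) := by
    refine ⟨fun s hs hsmax => ?_, fun s hs => ?_⟩
    · have := card_linkJoin_of_maximal hσ hmax hs hsmax
      omega
    · have hup := hcount _ (hd ▸ (isNClique_linkJoin_iff hσ).2 hs)
      rwa [← hd, add_assoc, ← image_linkJoin_cliquesAbove hσ,
        Set.ncard_image_of_injective _ linkJoin_injective] at hup
  exact ⟨hlink, fun h => (show d - σ.card = 1 by omega) ▸ hlink⟩
end

section
/- The join of s cycles, each of length ≥ 4, is a (2s−1)-leveled graph: every maximal clique has size 2s and every clique of size 2s−1 is contained in exactly two cliques of size 2s. -/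
open Finset Function

theorem Finset.card_eq_sum_card_filter {V ι : Type*} [Fintype ι] [DecidableEq ι]
    (p : V → ι) (C : Finset V) : #C = ∑ i, #{v ∈ C | p v = i} :=
  card_eq_sum_card_fiberwise fun _ _ => mem_coe.2 (mem_univ _)

namespace SimpleGraph

variable {V W ι : Type*}

/-- For finite graphs these are the disjoint unions of cycles of length at least 4. -/
def HasIndepNeighborPairs (H : SimpleGraph V) : Prop :=
  ∀ v, ∃ a b, a ≠ b ∧ ¬ H.Adj a b ∧ H.neighborSet v = {a, b}

theorem Iso.hasIndepNeighborPairs {H : SimpleGraph V} {H' : SimpleGraph W} (e : H ≃g H')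
    (h : H'.HasIndepNeighborPairs) : H.HasIndepNeighborPairs := by
  intro v
  obtain ⟨a, b, hab, hnadj, hnbr⟩ := h (e v)
  refine ⟨e.symm a, e.symm b, e.symm.injective.ne hab, by rwa [e.symm.map_adj_iff], ?_⟩
  ext w
  rw [mem_neighborSet, ← e.map_adj_iff, ← mem_neighborSet, hnbr]
  simp [← e.eq_symm_apply]

open Fin.CommRing in
theorem cycleGraph_hasIndepNeighborPairs {k : ℕ} (hk : 4 ≤ k) :
    (cycleGraph k).HasIndepNeighborPairs := by
  obtain ⟨m, rfl⟩ : ∃ m, k = m + 4 := ⟨k - 4, by omega⟩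
  have hsmall : (2 : Fin (m + 4)) ≠ 0 ∧ (2 : Fin (m + 4)) ≠ 1 ∧ (3 : Fin (m + 4)) ≠ 0 := by
    simp [Fin.ext_iff, Nat.mod_eq_of_lt]
  intro v
  refine ⟨v - 1, v + 1, fun h => hsmall.1 (by linear_combination -h), ?_, cycleGraph_neighborSet⟩
  rw [cycleGraph_adj]
  rintro (h | h)
  · exact hsmall.2.2 (by linear_combination -h)
  · exact hsmall.2.1 (by linear_combination h)

theorem HasIndepNeighborPairs.exists_of_induce {G : SimpleGraph V} {s : Set V}
    (h : (G.induce s).HasIndepNeighborPairs) {v : V} (hv : v ∈ s) :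
    ∃ a ∈ s, ∃ b ∈ s, a ≠ b ∧ ¬ G.Adj a b ∧ ∀ w ∈ s, (G.Adj v w ↔ w = a ∨ w = b) := by
  obtain ⟨⟨a, ha⟩, ⟨b, hb⟩, hab, hnadj, hnbr⟩ := h ⟨v, hv⟩
  refine ⟨a, ha, b, hb, by simpa using hab, by simpa using hnadj, fun w hw => ?_⟩
  simpa using congrArg (⟨w, hw⟩ ∈ ·) hnbr

section Join

variable [DecidableEq ι] {G : SimpleGraph V} {p : V → ι}

theorem card_filter_le_two_of_isClique
    (hpart : ∀ i, (G.induce {v | p v = i}).HasIndepNeighborPairs)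
    {C : Finset V} (hC : G.IsClique (C : Set V)) (i : ι) : #{v ∈ C | p v = i} ≤ 2 := by
  by_contra! h
  obtain ⟨x, hx, y, hy, z, hz, hxy, hxz, hyz⟩ := two_lt_card.1 h
  simp only [mem_filter] at hx hy hz
  obtain ⟨a, -, b, -, -, hnadj, hnbr⟩ := (hpart i).exists_of_induce hx.2
  have hyz' := hC hy.1 hz.1 hyz
  rcases (hnbr y hy.2).1 (hC hx.1 hy.1 hxy) with rfl | rfl <;>
    rcases (hnbr z hz.2).1 (hC hx.1 hz.1 hxz) with rfl | rfl
  exacts [hyz rfl, hnadj hyz', hnadj hyz'.symm, hyz rfl]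

theorem card_filter_eq_two_of_isNClique [Fintype ι]
    (hpart : ∀ i, (G.induce {v | p v = i}).HasIndepNeighborPairs)
    {t : Finset V} (ht : G.IsNClique (2 * Fintype.card ι) t) (i : ι) :
    #{v ∈ t | p v = i} = 2 := by
  have hsum : ∑ i, #{v ∈ t | p v = i} = ∑ _i : ι, 2 := by
    rw [← card_eq_sum_card_filter, ht.card_eq]
    simp [mul_comm]
  exact (sum_eq_sum_iff_of_le fun i _ => card_filter_le_two_of_isClique hpart ht.isClique i).1
    hsum i (mem_univ i)

theorem exists_card_filter_eq_one [Fintype ι] [Nonempty ι]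
    (hpart : ∀ i, (G.induce {v | p v = i}).HasIndepNeighborPairs)
    {C : Finset V} (hC : G.IsNClique (2 * Fintype.card ι - 1) C) :
    ∃ i, #{v ∈ C | p v = i} = 1 := by
  by_contra! h
  have heven : Even #C := by
    rw [card_eq_sum_card_filter p]
    refine even_sum _ fun i _ => ?_
    have := card_filter_le_two_of_isClique hpart hC.isClique i
    interval_cases hi : #{v ∈ C | p v = i}
    exacts [Even.zero, absurd hi (h i), even_two]
  rw [hC.card_eq, Nat.even_sub (by have := Fintype.card_pos (α := ι); omega)] at heven
  simp at heven

variable [DecidableEq V]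

theorem isClique_insert_of_adj_of_eq (hcross : ∀ u v, p u ≠ p v → G.Adj u v)
    {C : Finset V} (hC : G.IsClique (C : Set V)) {w : V}
    (hw : ∀ u ∈ C, p u = p w → G.Adj w u) : G.IsClique ((insert w C : Finset V) : Set V) := by
  rw [coe_insert, isClique_insert]
  refine ⟨hC, fun u hu hne => ?_⟩
  by_cases h : p u = p w
  · exact hw u hu h
  · exact hcross w u (Ne.symm h)

theorem notMem_and_isClique_insert_of_filter_eq_singleton
    (hcross : ∀ u v, p u ≠ p v → G.Adj u v) {C : Finset V} (hC : G.IsClique (C : Set V))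
    {i : ι} {v w : V} (hv : {u ∈ C | p u = i} = {v}) (hw : p w = i) (hvw : G.Adj v w) :
    w ∉ C ∧ G.IsClique ((insert w C : Finset V) : Set V) := by
  have hmem : ∀ u ∈ C, p u = i → u = v := fun u hu hpu => by
    rw [← mem_singleton, ← hv, mem_filter]
    exact ⟨hu, hpu⟩
  refine ⟨fun hwC => hvw.ne (hmem w hwC hw).symm, isClique_insert_of_adj_of_eq hcross hC ?_⟩
  intro u hu hpu
  rw [hmem u hu (hpu.trans hw)]
  exact hvw.symm

theorem exists_isClique_insert_of_card_filter_le_one (hsurj : Surjective p)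
    (hcross : ∀ u v, p u ≠ p v → G.Adj u v)
    (hpart : ∀ i, (G.induce {v | p v = i}).HasIndepNeighborPairs)
    {C : Finset V} (hC : G.IsClique (C : Set V)) {i : ι} (h : #{v ∈ C | p v = i} ≤ 1) :
    ∃ w ∉ C, G.IsClique ((insert w C : Finset V) : Set V) := by
  rcases Nat.le_one_iff_eq_zero_or_eq_one.1 h with h0 | h1
  · rw [card_eq_zero, filter_eq_empty_iff] at h0
    obtain ⟨w, rfl⟩ := hsurj i
    exact ⟨w, fun hw => h0 hw rfl,
      isClique_insert_of_adj_of_eq hcross hC fun u hu hpu => absurd hpu (h0 hu)⟩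
  · obtain ⟨v, hv⟩ := card_eq_one.1 h1
    obtain ⟨a, hai, _, -, -, -, hnbr⟩ :=
      (hpart i).exists_of_induce (mem_filter.1 (hv.ge (mem_singleton_self v))).2
    exact ⟨a, notMem_and_isClique_insert_of_filter_eq_singleton hcross hC hv hai
      ((hnbr a hai).2 (.inl rfl))⟩

theorem card_eq_of_isClique_of_maximal [Fintype ι] (hsurj : Surjective p)
    (hcross : ∀ u v, p u ≠ p v → G.Adj u v)
    (hpart : ∀ i, (G.induce {v | p v = i}).HasIndepNeighborPairs)
    {C : Finset V} (hC : G.IsClique (C : Set V))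
    (hmax : ∀ t : Finset V, G.IsClique (t : Set V) → C ⊆ t → C = t) :
    #C = 2 * Fintype.card ι := by
  have h2 : ∀ i, #{v ∈ C | p v = i} = 2 := fun i => by
    refine (card_filter_le_two_of_isClique hpart hC i).antisymm (not_lt.1 fun hlt => ?_)
    obtain ⟨w, hwC, hw⟩ :=
      exists_isClique_insert_of_card_filter_le_one hsurj hcross hpart hC (Nat.le_of_lt_succ hlt)
    exact hwC (hmax _ hw (subset_insert w C) ▸ mem_insert_self w C)
  rw [card_eq_sum_card_filter p]
  simp [h2, mul_comm]

theorem eq_and_adj_of_isNClique_insert [Fintype ι]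
    (hpart : ∀ i, (G.induce {v | p v = i}).HasIndepNeighborPairs)
    {C : Finset V} {i : ι} {v w : V} (hv : {u ∈ C | p u = i} = {v}) (hwC : w ∉ C)
    (ht : G.IsNClique (2 * Fintype.card ι) (insert w C)) : p w = i ∧ G.Adj v w := by
  have hvC := (mem_filter.1 (hv.ge (mem_singleton_self v))).1
  have hwi : p w = i := by
    by_contra hwi
    have := card_filter_eq_two_of_isNClique hpart ht i
    rw [filter_insert, if_neg hwi, hv, card_singleton] at this
    omega
  exact ⟨hwi, ht.isClique (mem_insert_of_mem hvC) (mem_insert_self w C)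
    (ne_of_mem_of_not_mem hvC hwC)⟩

theorem ncard_isNClique_supset_eq_two [Fintype ι] [Nonempty ι]
    (hcross : ∀ u v, p u ≠ p v → G.Adj u v)
    (hpart : ∀ i, (G.induce {v | p v = i}).HasIndepNeighborPairs)
    {C : Finset V} (hC : G.IsNClique (2 * Fintype.card ι - 1) C) :
    {t : Finset V | G.IsNClique (2 * Fintype.card ι - 1 + 1) t ∧ C ⊆ t}.ncard = 2 := by
  have hcard : #C + 1 = 2 * Fintype.card ι := by
    have := Fintype.card_pos (α := ι)
    rw [hC.card_eq]
    omega
  rw [← hC.card_eq, hcard]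
  obtain ⟨i, hi⟩ := exists_card_filter_eq_one hpart hC
  obtain ⟨v, hv⟩ := card_eq_one.1 hi
  obtain ⟨a, hai, b, hbi, hab, -, hnbr⟩ :=
    (hpart i).exists_of_induce (mem_filter.1 (hv.ge (mem_singleton_self v))).2
  have hext : ∀ w, p w = i → G.Adj v w →
      w ∉ C ∧ G.IsNClique (2 * Fintype.card ι) (insert w C) := fun w hw hvw => by
    obtain ⟨hwC, hcl⟩ :=
      notMem_and_isClique_insert_of_filter_eq_singleton hcross hC.isClique hv hw hvw
    exact ⟨hwC, hcl, by rw [card_insert_of_notMem hwC, hcard]⟩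
  obtain ⟨haC, ha⟩ := hext a hai ((hnbr a hai).2 (.inl rfl))
  obtain ⟨-, hb⟩ := hext b hbi ((hnbr b hbi).2 (.inr rfl))
  have hset : {t : Finset V | G.IsNClique (2 * Fintype.card ι) t ∧ C ⊆ t} =
      {insert a C, insert b C} := by
    ext t
    refine ⟨fun ⟨ht, hCt⟩ => ?_, ?_⟩
    · obtain ⟨w, hwC, rfl⟩ := exists_eq_insert_iff.2 ⟨hCt, hcard.trans ht.card_eq.symm⟩
      obtain ⟨hwi, hvw⟩ := eq_and_adj_of_isNClique_insert hpart hv hwC ht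
      rcases (hnbr w hwi).1 hvw with rfl | rfl <;> simp
    · rintro (rfl | rfl)
      exacts [⟨ha, subset_insert a C⟩, ⟨hb, subset_insert b C⟩]
  rw [hset, Set.ncard_pair]
  intro h
  rcases mem_insert.1 (h ▸ mem_insert_self a C) with h' | h'
  exacts [hab h', haC h']

theorem isLeveled_of_join [Fintype ι] [Nonempty ι] (hsurj : Surjective p)
    (hcross : ∀ u v, p u ≠ p v → G.Adj u v)
    (hpart : ∀ i, (G.induce {v | p v = i}).HasIndepNeighborPairs) :
    G.IsLeveled (2 * Fintype.card ι - 1) := by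
  refine ⟨fun C hC hmax => ?_, fun C hC => ncard_isNClique_supset_eq_two hcross hpart hC⟩
  rw [card_eq_of_isClique_of_maximal hsurj hcross hpart hC hmax]
  have := Fintype.card_pos (α := ι)
  omega

end Join
end SimpleGraph

/-- The join of `s` cycles, each of length at least 4, is a `(2s-1)`-leveled graph:
every maximal clique has size `2s` and every clique of size `2s-1` lies in exactly
two cliques of size `2s`. -/
theorem join_of_cycles_isLeveled {V : Type*} [Fintype V] [DecidableEq V]
    (G : SimpleGraph V) (s : ℕ) (hs : 1 ≤ s)
    (n : Fin s → ℕ) (hn : ∀ i, 4 ≤ n i)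
    (S : Fin s → Finset V)
    (hdisj : ∀ i j, i ≠ j → Disjoint (S i) (S j))
    (hcover : Finset.univ.biUnion S = Finset.univ)
    (hcross : ∀ i j, i ≠ j → ∀ u ∈ S i, ∀ v ∈ S j, G.Adj u v)
    (hcycle : ∀ i, Nonempty ((G.induce (S i : Set V)) ≃g SimpleGraph.cycleGraph (n i))) :
    G.IsLeveled (2 * s - 1) := by
  have hmem : ∀ v, ∃ i, v ∈ S i := fun v => by simpa using hcover.ge (mem_univ v)
  choose p hp using hmem
  have hS : ∀ i, (S i : Set V) = {v | p v = i} := fun i => Set.ext fun v =>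
    ⟨fun hv => by_contra fun h => disjoint_left.1 (hdisj _ _ h) (hp v) hv, fun hv => hv ▸ hp v⟩
  have hpart : ∀ i, (G.induce {v | p v = i}).HasIndepNeighborPairs := fun i =>
    hS i ▸ SimpleGraph.Iso.hasIndepNeighborPairs (hcycle i).some
      (SimpleGraph.cycleGraph_hasIndepNeighborPairs (hn i))
  have hsurj : Surjective p := fun i => by
    obtain ⟨e⟩ := hcycle i
    obtain ⟨v, hv⟩ := e.symm ⟨0, by have := hn i; omega⟩
    exact ⟨v, show v ∈ {v | p v = i} from hS i ▸ hv⟩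
  have : Nonempty (Fin s) := ⟨⟨0, hs⟩⟩
  simpa using
    SimpleGraph.isLeveled_of_join hsurj (fun u v h => hcross _ _ h u (hp u) v (hp v)) hpart
end

section
/- For an Eulerian simplicial complex K of dimension d = 2s−1 satisfying the Dehn-Sommerville relation h_{s−1}(K) = h_{s+1}(K), the face number f_s(K) is a fixed linear combination of f_{−1}(K), f₀(K), …, f_{s−1}(K) with coefficients depending only on s; consequently f_s(K) ≤ C_s · f₀(K)^s for a constant C_s depending only on s. -/
/-!
Comparing the coefficients of `x^{s+1}` and `x^{s-1}` in the defining identity of the `h`-vector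
writes `h_{s+1}` and `h_{s-1}` as alternating binomial combinations of the face numbers. In
`h_{s-1} - h_{s+1}` no face of more than `s + 1` vertices occurs and `f_s` occurs with coefficient
`±1`, so the relation `h_{s-1} = h_{s+1}` solves for `f_s`. Down-closure gives
`f_{j-1} ≤ (f₀ choose j) ≤ f₀^j ≤ f₀^s` for `j ≤ s`, whence the bound.
-/

open Finset Polynomial

lemma neg_one_pow_sub_sub_mul_choose {R : Type*} [Ring R] {n c : ℕ} (hc : c ≤ n) (k : ℕ) :
    (-1 : R) ^ (n - c - k) * (n - c).choose k = (-1) ^ (n + c + k) * (n - c).choose k := by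
  rcases le_or_gt k (n - c) with hk | hk
  · rw [show n + c + k = n - c - k + 2 * (c + k) by omega, pow_add, pow_mul, neg_one_sq, one_pow,
      mul_one]
  · simp [Nat.choose_eq_zero_of_lt hk]

lemma coeff_sum_C_mul_X_pow_sub {R : Type*} [Semiring R] (n : ℕ) (h : ℕ → R) {k : ℕ}
    (hk : k ≤ n) : (∑ i ∈ range (n + 1), C (h i) * X ^ (n - i)).coeff k = h (n - k) := by
  rw [finsetSum_coeff, sum_eq_single (n - k)]
  · rw [coeff_C_mul_X_pow, if_pos (by omega)]
  · intro i hi hne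
    rw [coeff_C_mul_X_pow, if_neg (by simp only [mem_range] at hi; omega)]
  · simp only [mem_range]; omega

lemma coeff_sum_C_mul_X_sub_one_pow_sub {R : Type*} [CommRing R] (n : ℕ) (f : ℕ → R) (k : ℕ) :
    (∑ c ∈ range (n + 1), C (f c) * (X - 1) ^ (n - c)).coeff k =
      ∑ c ∈ range (n + 1), (-1) ^ (n + c + k) * (n - c).choose k * f c := by
  rw [finsetSum_coeff]
  refine sum_congr rfl fun c hc => ?_
  rw [coeff_C_mul, sub_eq_add_neg, ← C_1, ← C_neg, coeff_X_add_C_pow,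
    neg_one_pow_sub_sub_mul_choose (Nat.lt_succ_iff.mp (mem_range.mp hc)), mul_comm]

theorem eq_sum_choose_of_forall_eval_eq {R : Type*} [CommRing R] [IsDomain R] [Infinite R]
    {n : ℕ} {h f : ℕ → R}
    (H : ∀ x : R, ∑ i ∈ range (n + 1), h i * x ^ (n - i) =
      ∑ c ∈ range (n + 1), f c * (x - 1) ^ (n - c)) {k : ℕ} (hk : k ≤ n) :
    h (n - k) = ∑ c ∈ range (n + 1), (-1) ^ (n + c + k) * (n - c).choose k * f c := by
  have hpoly : ∑ i ∈ range (n + 1), C (h i) * X ^ (n - i) =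
      ∑ c ∈ range (n + 1), C (f c) * (X - 1 : R[X]) ^ (n - c) :=
    Polynomial.funext fun x => by simpa [eval_finsetSum] using H x
  rw [← coeff_sum_C_mul_X_pow_sub n h hk, hpoly, coeff_sum_C_mul_X_sub_one_pow_sub]

-- `h_{s-1} - h_{s+1} = ∑_j middleDehnSommervilleCoeff s j * f_{j-1}`.
def middleDehnSommervilleCoeff (R : Type*) [Ring R] (s j : ℕ) : R :=
  (-1) ^ (s + j) * ((2 * s - j).choose (s - 1) - (2 * s - j).choose (s + 1))

section
variable {R : Type*} [Ring R] {s : ℕ}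

lemma middleDehnSommervilleCoeff_succ : middleDehnSommervilleCoeff R s (s + 1) = -1 := by
  simp [middleDehnSommervilleCoeff, show 2 * s - (s + 1) = s - 1 by omega,
    Nat.choose_eq_zero_of_lt (show s - 1 < s + 1 by omega)]

lemma middleDehnSommervilleCoeff_eq_zero {j : ℕ} (hj : s + 1 < j) (hj' : j ≤ 2 * s) :
    middleDehnSommervilleCoeff R s j = 0 := by
  rw [middleDehnSommervilleCoeff, Nat.choose_eq_zero_of_lt (show 2 * s - j < s - 1 by omega),
    Nat.choose_eq_zero_of_lt (show 2 * s - j < s + 1 by omega), sub_self, mul_zero]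

end

theorem eq_sum_middleDehnSommervilleCoeff_mul {R : Type*} [CommRing R] [IsDomain R] [Infinite R]
    {s : ℕ} (hs : 1 ≤ s) {h f : ℕ → R}
    (H : ∀ x : R, ∑ i ∈ range (2 * s + 1), h i * x ^ (2 * s - i) =
      ∑ c ∈ range (2 * s + 1), f c * (x - 1) ^ (2 * s - c))
    (hds : h (s - 1) = h (s + 1)) :
    f (s + 1) = ∑ j ∈ range (s + 1), middleDehnSommervilleCoeff R s j * f j := by
  have hplus := eq_sum_choose_of_forall_eval_eq H (k := s - 1) (by omega)
  have hminus := eq_sum_choose_of_forall_eval_eq H (k := s + 1) (by omega)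
  rw [show 2 * s - (s - 1) = s + 1 by omega] at hplus
  rw [show 2 * s - (s + 1) = s - 1 by omega] at hminus
  have hrel : ∑ c ∈ range (2 * s + 1), middleDehnSommervilleCoeff R s c * f c
      = h (s - 1) - h (s + 1) := by
    rw [hplus, hminus, ← sum_sub_distrib]
    refine sum_congr rfl fun c _ => ?_
    obtain ⟨t, rfl⟩ : ∃ t, s = t + 1 := ⟨s - 1, by omega⟩
    rw [middleDehnSommervilleCoeff,
      show 2 * (t + 1) + c + (t + 1 + 1) = t + c + 2 * (t + 2) by ring,
      show 2 * (t + 1) + c + (t + 1 - 1) = t + c + 2 * (t + 1) by omega]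
    simp only [pow_add, pow_mul, neg_one_sq, one_pow, mul_one]
    ring
  have htrunc : ∑ c ∈ range (2 * s + 1), middleDehnSommervilleCoeff R s c * f c
      = ∑ c ∈ range (s + 2), middleDehnSommervilleCoeff R s c * f c := by
    refine (sum_subset (range_subset_range.mpr (by omega)) fun c hc hc' => ?_).symm
    simp only [mem_range, not_lt] at hc hc'
    rw [middleDehnSommervilleCoeff_eq_zero (by omega) (by omega), zero_mul]
  rw [htrunc, sum_range_succ, middleDehnSommervilleCoeff_succ, hds, sub_self] at hrel
  linear_combination -hrel

lemma card_filter_card_eq_le_choose {V : Type*} [DecidableEq V] {K : Finset (Finset V)}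
    (hdown : ∀ t ∈ K, ∀ u ⊆ t, u ∈ K) (j : ℕ) :
    #(K.filter (·.card = j)) ≤ (#(K.filter (·.card = 1))).choose j := by
  set W := K.biUnion id
  have hvertices : K.filter (·.card = 1) = W.image ({·}) := by
    ext u
    simp only [mem_filter, mem_image, W, mem_biUnion, id]
    constructor
    · rintro ⟨huK, hu⟩
      obtain ⟨v, rfl⟩ := card_eq_one.mp hu
      exact ⟨v, ⟨{v}, huK, mem_singleton_self v⟩, rfl⟩
    · rintro ⟨v, ⟨t, htK, hvt⟩, rfl⟩
      exact ⟨hdown t htK {v} (singleton_subset_iff.mpr hvt), card_singleton v⟩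
  have hfaces : K.filter (·.card = j) ⊆ W.powersetCard j := fun t ht => by
    rw [mem_filter] at ht
    exact mem_powersetCard.mpr ⟨subset_biUnion_of_mem id ht.1, ht.2⟩
  calc #(K.filter (·.card = j)) ≤ #(W.powersetCard j) := card_le_card hfaces
    _ = (#(K.filter (·.card = 1))).choose j := by
      rw [card_powersetCard, hvertices, card_image_of_injective _ singleton_injective]

lemma filter_card_eq_one_nonempty {V : Type*} [DecidableEq V] {K : Finset (Finset V)}
    (hdown : ∀ t ∈ K, ∀ u ⊆ t, u ∈ K) {t : Finset V} (ht : t ∈ K) (hne : t.Nonempty) :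
    (K.filter (·.card = 1)).Nonempty := by
  obtain ⟨v, hv⟩ := hne
  exact ⟨{v}, mem_filter.mpr ⟨hdown t ht {v} (singleton_subset_iff.mpr hv), card_singleton v⟩⟩

lemma sum_mul_le_sum_abs_mul_pow {a f : ℕ → ℝ} {N : ℝ} (hN : 1 ≤ N) {s : ℕ}
    (hf₀ : ∀ j, 0 ≤ f j) (hf : ∀ j ≤ s, f j ≤ N ^ j) :
    ∑ j ∈ range (s + 1), a j * f j ≤ (∑ j ∈ range (s + 1), |a j|) * N ^ s := by
  rw [sum_mul]
  refine sum_le_sum fun j hj => ?_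
  have hjs : j ≤ s := Nat.lt_succ_iff.mp (mem_range.mp hj)
  calc a j * f j ≤ |a j| * f j := mul_le_mul_of_nonneg_right (le_abs_self _) (hf₀ j)
    _ ≤ |a j| * N ^ s :=
      mul_le_mul_of_nonneg_left ((hf j hjs).trans (pow_le_pow_right₀ hN hjs)) (abs_nonneg _)

/-- For a `(2s-1)`-dimensional simplicial complex satisfying the middle
Dehn-Sommerville relation `h_{s-1} = h_{s+1}`, the face number `f_s` (faces of
cardinality `s+1`) is a fixed linear combination of `f_{-1}, f₀, …, f_{s-1}` (faces of
cardinality `0, 1, …, s`) with coefficients depending only on `s`; consequently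
`f_s ≤ C_s · f₀^s` for a constant `C_s` depending only on `s`.  Here the `h`-vector
is defined by `Σ_i h_i x^{d+1-i} = Σ_c f_{c-1} (x-1)^{d+1-c}` with `d = 2s-1`. -/
theorem dehnSommerville_middle_face_bound (s : ℕ) (hs : 1 ≤ s) :
    ∃ (a : ℕ → ℝ) (Cs : ℝ), ∀ (V : Type) [Fintype V] [DecidableEq V]
      (K : Finset (Finset V)),
      ∅ ∈ K → (∀ t ∈ K, ∀ u ⊆ t, u ∈ K) → (∀ t ∈ K, t.card ≤ 2 * s) →
      (∃ t ∈ K, t.card = 2 * s) →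
      ∀ h : ℕ → ℝ,
        (∀ x : ℝ, ∑ i ∈ Finset.range (2 * s + 1), h i * x ^ (2 * s - i) =
          ∑ c ∈ Finset.range (2 * s + 1),
            ((K.filter (fun t => t.card = c)).card : ℝ) * (x - 1) ^ (2 * s - c)) →
        h (s - 1) = h (s + 1) →
        (((K.filter (fun t => t.card = s + 1)).card : ℝ) =
          ∑ j ∈ Finset.range (s + 1),
            a j * ((K.filter (fun t => t.card = j)).card : ℝ)) ∧
        ((K.filter (fun t => t.card = s + 1)).card : ℝ) ≤
          Cs * ((K.filter (fun t => t.card = 1)).card : ℝ) ^ s := by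
  refine ⟨middleDehnSommervilleCoeff ℝ s, ∑ j ∈ range (s + 1), |middleDehnSommervilleCoeff ℝ s j|,
    fun V _ _ K _ hdown _ ⟨t, htK, htcard⟩ h hpoly hds => ?_⟩
  have hrel := eq_sum_middleDehnSommervilleCoeff_mul hs hpoly hds
  have hvertex : 1 ≤ ((K.filter (·.card = 1)).card : ℝ) := Nat.one_le_cast.mpr <|
    card_pos.mpr <| filter_card_eq_one_nonempty hdown htK (card_pos.mp (by omega))
  refine ⟨hrel, hrel ▸ sum_mul_le_sum_abs_mul_pow hvertex (fun j => by positivity) fun j _ => ?_⟩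
  exact_mod_cast (card_filter_card_eq_le_choose hdown j).trans (Nat.choose_le_pow _ _)
end
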